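/- Let A be an n×n real matrix (n ≥ 2) and suppose Av = λv for some λ ∈ ℝ and some v = (v_1, …, v_n)^T ∈ ℝ^n with v_i ≠ 0 for every i. Let S = diag(v) and B = S^{-1} A S. If λ₂ is a complex eigenvalue of A with λ₂ ≠ λ, then λ₂ lies in the Gershgorin region of the second type of B^T. -/

import Mathlib

open Matrix
open scoped ENNReal

/-- Non-increasing (descending) sort of a list of reals. -/
noncomputable def sortDesc (l : List ℝ) : List ℝ := (l.insertionSort (· ≤ ·)).reverse

/-- Given the descending rearrangement `l` of `n` numbers, the sum of the largest
(about) half minus the sum of the smallest (about) half, skipping the middle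
element when `n` is odd. -/
noncomputable def halfSumDiff (n : ℕ) (l : List ℝ) : ℝ :=
  if n % 2 = 1 then (l.take ((n - 1) / 2)).sum - (l.drop ((n + 1) / 2)).sum
  else (l.take (n / 2)).sum - (l.drop (n / 2)).sum

/-- Radius of the `i`-th Gershgorin disc of the second type of `M`, computed from
the `i`-th row of `M` with the diagonal entry replaced by `0`. -/
noncomputable def secondTypeRadius {n : ℕ} (M : Matrix (Fin n) (Fin n) ℝ) (i : Fin n) : ℝ :=
  halfSumDiff n (sortDesc (List.ofFn fun j : Fin n => if j = i then 0 else M i j))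

/-- The `i`-th Gershgorin disc of the second type of `M`. -/
noncomputable def secondTypeDisc {n : ℕ} (M : Matrix (Fin n) (Fin n) ℝ) (i : Fin n) : Set ℂ :=
  Metric.closedBall ((M i i : ℝ) : ℂ) (secondTypeRadius M i)

/-- The Gershgorin region of the second type of `M`. -/
noncomputable def secondTypeRegion {n : ℕ} (M : Matrix (Fin n) (Fin n) ℝ) : Set ℂ :=
  ⋃ i : Fin n, secondTypeDisc M i

/-- `μ` is a (complex) eigenvalue of the real matrix `A`, i.e. a complex root of
its characteristic polynomial. -/
def IsEigenvalueC {n : ℕ} (A : Matrix (Fin n) (Fin n) ℝ) (μ : ℂ) : Prop :=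
  ((A.map ((↑) : ℝ → ℂ)).charpoly).IsRoot μ

/-- The `k`-th largest element (1-indexed) among the `n - 1` off-diagonal entries of
column `j` of `B`. -/
noncomputable def kthLargestOffDiag {n : ℕ} (B : Matrix (Fin n) (Fin n) ℝ) (j : Fin n)
    (k : ℕ) : ℝ :=
  (sortDesc (((List.ofFn fun i : Fin n => B i j).eraseIdx j.val))).getD (k - 1) 0

/-- The ℓ_p norm of a vector in ℝ^n. -/
noncomputable def lpNorm {n : ℕ} (p : ℝ≥0∞) (x : Fin n → ℝ) : ℝ :=
  @norm (PiLp p fun _ : Fin n => ℝ) _ ((WithLp.equiv p (∀ _ : Fin n, ℝ)).symm x)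

/-- The seminorm-like quantity `τ_p(B)`: the supremum of `‖Bᵀ x‖_p` over all real
vectors `x` with `xᵀ e = 0` and `‖x‖_p = 1`. -/
noncomputable def tau {n : ℕ} (p : ℝ≥0∞) (B : Matrix (Fin n) (Fin n) ℝ) : ℝ :=
  sSup { t : ℝ | ∃ x : Fin n → ℝ, (∑ i, x i) = 0 ∧ lpNorm p x = 1 ∧ t = lpNorm p (Bᵀ *ᵥ x) }

/-- The Ostrowski–Brauer set `Γ(M)` of a real square matrix `M`. -/
noncomputable def brauerSet {n : ℕ} (M : Matrix (Fin n) (Fin n) ℝ) : Set ℂ :=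
  ⋃ (i : Fin n) (j : Fin n) (_ : i < j),
    { y : ℂ | ‖y - (M i i : ℝ)‖ * ‖y - (M j j : ℝ)‖ ≤
        (∑ k ∈ Finset.univ.filter fun k => k ≠ i, |M i k|) *
        (∑ k ∈ Finset.univ.filter fun k => k ≠ j, |M j k|) }

/-- `cs_j(A)` from Definition 2.3: sorted column sums difference. -/
noncomputable def csCol {n : ℕ} (A : Matrix (Fin n) (Fin n) ℝ) (j : Fin n) : ℝ :=
  halfSumDiff n (sortDesc (List.ofFn fun i : Fin n => A i j))

/-! Since `A v = λ v`, the matrix `B = S⁻¹ A S` has all row sums equal to `λ`, so an eigenvector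
`w` of `Bᵀ` for an eigenvalue `μ ≠ λ` has `∑ wⱼ = 0`. Let `i` maximise `|wᵢ|` and let `x` be
row `i` of `Bᵀ` with its diagonal entry replaced by `0`. Then `(μ - bᵢᵢ) wᵢ = ∑ⱼ (xⱼ - c) wⱼ`
for every shift `c`, so `|μ - bᵢᵢ| ≤ ∑ⱼ |xⱼ - c|`. Choosing `c` to be a median of the `xⱼ` turns
the right-hand side into the sum of the larger half of the `xⱼ` minus the sum of the smaller
half, which is the second-type radius. -/

theorem List.sum_map_sub_const {G : Type*} [AddCommGroup G] (t : List G) (c : G) :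
    (t.map (· - c)).sum = t.sum - t.length • c := by
  induction t with
  | nil => simp
  | cons a t ih => simp only [map_cons, sum_cons, ih, length_cons, succ_nsmul]; abel

theorem List.sum_map_const_sub {G : Type*} [AddCommGroup G] (t : List G) (c : G) :
    (t.map (c - ·)).sum = t.length • c - t.sum := by
  induction t with
  | nil => simp
  | cons a t ih => simp only [map_cons, sum_cons, ih, length_cons, succ_nsmul]; abel

theorem halfSumDiff_eq_take_sub_drop (n : ℕ) (l : List ℝ) :
    halfSumDiff n l = (l.take (n / 2)).sum - (l.drop (n - n / 2)).sum := by
  unfold halfSumDiff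
  split_ifs <;> congr 3 <;> omega

theorem halfSumDiff_eq_sum_abs_sub_median {l : List ℝ} (hl : l.Pairwise (· ≥ ·)) :
    halfSumDiff l.length l = (l.map fun x => |x - l.getD (l.length / 2) 0|).sum := by
  set k := l.length / 2
  set c := l.getD k 0 with hc
  rcases Nat.eq_zero_or_pos l.length with hnil | hpos
  · simp [List.length_eq_zero_iff.1 hnil, halfSumDiff]
  have hk : k < l.length := by omega
  have hdrop : l.drop k = c :: l.drop (k + 1) := by
    rw [List.drop_eq_getElem_cons hk, hc, List.getD_eq_getElem _ _ hk]
  have hge : ∀ x ∈ l.take k, c ≤ x := by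
    rw [← List.take_append_drop k l, List.pairwise_append, hdrop] at hl
    exact fun x hx => hl.2.2 x hx c List.mem_cons_self
  have hle : ∀ x ∈ l.drop k, x ≤ c := by
    have hsorted := hl.sublist (List.drop_sublist k l)
    rw [hdrop, List.pairwise_cons] at hsorted
    rw [hdrop]
    exact List.forall_mem_cons.2 ⟨le_rfl, hsorted.1⟩
  have htake : ((l.take k).map fun x => |x - c|).sum = (l.take k).sum - k * c := by
    rw [List.map_congr_left fun x hx => abs_of_nonneg (sub_nonneg.2 (hge x hx)),
      List.sum_map_sub_const, List.length_take_of_le hk.le, nsmul_eq_mul]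
  have hdrop' : ((l.drop k).map fun x => |x - c|).sum
      = (l.length - k : ℕ) * c - (l.drop k).sum := by
    rw [List.map_congr_left fun x hx => abs_sub_comm x c ▸ abs_of_nonneg (sub_nonneg.2 (hle x hx)),
      List.sum_map_const_sub, List.length_drop, nsmul_eq_mul]
  rw [halfSumDiff_eq_take_sub_drop]
  conv_rhs => rw [← List.take_append_drop k l, List.map_append, List.sum_append, htake, hdrop']
  obtain heven | hodd : l.length - k = k ∨ l.length - k = k + 1 := by omega
  · rw [heven]
    ring
  · rw [hodd, hdrop, List.sum_cons]
    push_cast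
    ring

theorem sortDesc_perm (l : List ℝ) : (sortDesc l).Perm l :=
  (List.reverse_perm _).trans (List.perm_insertionSort _ l)

theorem pairwise_sortDesc (l : List ℝ) : (sortDesc l).Pairwise (· ≥ ·) :=
  List.pairwise_reverse.2 (List.pairwise_insertionSort _ l)

theorem length_sortDesc (l : List ℝ) : (sortDesc l).length = l.length :=
  (sortDesc_perm l).length_eq

theorem exists_sum_abs_sub_eq_secondTypeRadius {n : ℕ} (M : Matrix (Fin n) (Fin n) ℝ)
    (i : Fin n) : ∃ c : ℝ, ∑ j, |(if j = i then 0 else M i j) - c| = secondTypeRadius M i := by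
  set l := List.ofFn fun j : Fin n => if j = i then 0 else M i j
  have hlen : (sortDesc l).length = n := by rw [length_sortDesc, List.length_ofFn]
  have hmedian := halfSumDiff_eq_sum_abs_sub_median (pairwise_sortDesc l)
  rw [hlen] at hmedian
  refine ⟨(sortDesc l).getD (n / 2) 0, ?_⟩
  rw [secondTypeRadius, hmedian, ((sortDesc_perm l).map _).sum_eq, List.map_ofFn, List.sum_ofFn]
  rfl

namespace Matrix

variable {ι : Type*} [Fintype ι]

theorem exists_mulVec_eq_smul_of_isRoot_charpoly [DecidableEq ι] {K : Type*} [Field K]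
    {M : Matrix ι ι K} {μ : K} (h : M.charpoly.IsRoot μ) : ∃ w ≠ 0, M *ᵥ w = μ • w := by
  rw [Polynomial.IsRoot.def, eval_charpoly] at h
  obtain ⟨w, hw0, hw⟩ := exists_mulVec_eq_zero_iff.2 h
  refine ⟨w, hw0, ?_⟩
  rw [sub_mulVec, scalar_apply, sub_eq_zero] at hw
  rw [← hw]
  ext i
  simp [mulVec_diagonal]

theorem map_mulVec_one_eq_smul {R S : Type*} [CommRing R] [CommRing S] (f : R →+* S)
    {M : Matrix ι ι R} {a : R} (h : M *ᵥ 1 = a • 1) : M.map f *ᵥ 1 = f a • 1 := by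
  ext i
  simpa using (f.map_mulVec M 1 i).symm.trans (congrArg f (congrFun h i))

theorem inv_diagonal_mul_mul_diagonal_mulVec_one [DecidableEq ι] {K : Type*} [Field K]
    (A : Matrix ι ι K) {v : ι → K} (hv : ∀ i, v i ≠ 0) {a : K} (hAv : A *ᵥ v = a • v) :
    ((diagonal v)⁻¹ * A * diagonal v) *ᵥ 1 = a • 1 := by
  have hinv : (diagonal v)⁻¹ = diagonal v⁻¹ :=
    inv_eq_left_inv (by rw [diagonal_mul_diagonal]; simp [hv])
  have hv1 : diagonal v *ᵥ 1 = v := by ext i; simp [mulVec_diagonal]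
  rw [← mulVec_mulVec, ← mulVec_mulVec, hinv, hv1, hAv]
  ext i
  simp [mulVec_diagonal, mul_left_comm _ a, hv]

theorem sum_eq_zero_of_transpose_mulVec_eq_smul {K : Type*} [Field K] {M : Matrix ι ι K}
    {a b : K} {w : ι → K} (hM : M *ᵥ 1 = a • 1) (hw : Mᵀ *ᵥ w = b • w) (hab : b ≠ a) :
    ∑ i, w i = 0 := by
  have h : b * ∑ i, w i = a * ∑ i, w i := by
    calc b * ∑ i, w i = 1 ⬝ᵥ (Mᵀ *ᵥ w) := by rw [hw, dotProduct_smul, one_dotProduct, smul_eq_mul]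
      _ = (M *ᵥ 1) ⬝ᵥ w := by rw [dotProduct_mulVec, vecMul_transpose]
      _ = a * ∑ i, w i := by rw [hM, smul_dotProduct, one_dotProduct, smul_eq_mul]
  exact (mul_eq_zero.1 (by linear_combination h : (b - a) * ∑ i, w i = 0)).resolve_left
    (sub_ne_zero.2 hab)

theorem exists_norm_sub_diag_le_sum_norm_sub [DecidableEq ι] {𝕜 : Type*} [NormedField 𝕜]
    (M : Matrix ι ι 𝕜) {μ : 𝕜} {w : ι → 𝕜} (hw0 : w ≠ 0) (hMw : M *ᵥ w = μ • w)
    (hsum : ∑ j, w j = 0) :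
    ∃ i, ∀ c : 𝕜, ‖μ - M i i‖ ≤ ∑ j, ‖(if j = i then 0 else M i j) - c‖ := by
  obtain ⟨j₀, hj₀⟩ := Function.ne_iff.1 hw0
  have : Nonempty ι := ⟨j₀⟩
  obtain ⟨i, hi⟩ := Finite.exists_max fun j => ‖w j‖
  have hwi : 0 < ‖w i‖ := (norm_pos_iff.2 hj₀).trans_le (hi j₀)
  refine ⟨i, fun c => le_of_mul_le_mul_right ?_ hwi⟩
  have hrow : (μ - M i i) * w i = ∑ j, ((if j = i then 0 else M i j) - c) * w j := by
    have hterm : ∀ j, ((if j = i then 0 else M i j) - c) * w j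
        = M i j * w j - (if i = j then M i i * w i else 0) - c * w j := by
      intro j
      by_cases h : j = i
      · subst h
        simp
      · simp [h, Ne.symm h, sub_mul]
    have hμ : ∑ j, M i j * w j = μ * w i := congrFun hMw i
    simp only [hterm, Finset.sum_sub_distrib, Finset.sum_ite_eq, Finset.mem_univ, if_true,
      ← Finset.mul_sum, hsum, hμ]
    ring
  calc ‖μ - M i i‖ * ‖w i‖ = ‖∑ j, ((if j = i then 0 else M i j) - c) * w j‖ := by
        rw [← norm_mul, hrow]
    _ ≤ ∑ j, ‖(if j = i then 0 else M i j) - c‖ * ‖w j‖ :=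
        (norm_sum_le _ _).trans_eq (by simp only [norm_mul])
    _ ≤ ∑ j, ‖(if j = i then 0 else M i j) - c‖ * ‖w i‖ := by gcongr; exact hi _
    _ = (∑ j, ‖(if j = i then 0 else M i j) - c‖) * ‖w i‖ := (Finset.sum_mul ..).symm

end Matrix

theorem IsEigenvalueC.transpose_units_conj {n : ℕ} {A S : Matrix (Fin n) (Fin n) ℝ} {μ : ℂ}
    (h : IsEigenvalueC A μ) (hS : IsUnit S) : IsEigenvalueC (S⁻¹ * A * S)ᵀ μ := by
  have hconj := charpoly_units_conj' hS.unit A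
  rw [IsUnit.unit_spec] at hconj
  change ((S⁻¹ * A * S)ᵀ.map Complex.ofRealHom).charpoly.IsRoot μ
  rwa [charpoly_map, charpoly_transpose, hconj, ← charpoly_map]

theorem stmt2_general {n : ℕ} (A : Matrix (Fin n) (Fin n) ℝ)
    (lam : ℝ) (v : Fin n → ℝ) (hv : ∀ i, v i ≠ 0) (hAv : A *ᵥ v = lam • v)
    (S B : Matrix (Fin n) (Fin n) ℝ) (hS : S = Matrix.diagonal v) (hB : B = S⁻¹ * A * S)
    (mu : ℂ) (hmu : IsEigenvalueC A mu) (hne : mu ≠ (lam : ℂ)) :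
    mu ∈ secondTypeRegion Bᵀ := by
  have hSunit : IsUnit S := hS ▸ isUnit_diagonal.2 (Pi.isUnit_iff.2 fun i => (hv i).isUnit)
  obtain ⟨w, hw0, hw⟩ := exists_mulVec_eq_smul_of_isRoot_charpoly
    (hB ▸ hmu.transpose_units_conj hSunit)
  have hrow : B.map ((↑) : ℝ → ℂ) *ᵥ 1 = (lam : ℂ) • 1 := map_mulVec_one_eq_smul Complex.ofRealHom
    (hB ▸ hS ▸ inv_diagonal_mul_mul_diagonal_mulVec_one A hv hAv)
  have hsum := sum_eq_zero_of_transpose_mulVec_eq_smul hrow (w := w) (by rwa [← transpose_map]) hne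
  obtain ⟨i, hi⟩ := exists_norm_sub_diag_le_sum_norm_sub _ hw0 hw hsum
  obtain ⟨c, hc⟩ := exists_sum_abs_sub_eq_secondTypeRadius Bᵀ i
  refine Set.mem_iUnion.2 ⟨i, ?_⟩
  rw [secondTypeDisc, Metric.mem_closedBall, Complex.dist_eq, ← hc]
  calc ‖mu - (Bᵀ i i : ℂ)‖
      ≤ ∑ j, ‖(if j = i then 0 else Bᵀ.map ((↑) : ℝ → ℂ) i j) - (c : ℂ)‖ := hi c
    _ = ∑ j, |(if j = i then 0 else Bᵀ i j) - c| := Finset.sum_congr rfl fun j _ => by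
      rw [← Real.norm_eq_abs, ← Complex.norm_real, Complex.ofReal_sub, apply_ite Complex.ofReal,
        Complex.ofReal_zero, map_apply]

/-- Theorem 3: if `A v = λ v` with all components of `v` nonzero and
`B = S⁻¹ A S` with `S = diag v`, then every eigenvalue of `A` other than `λ` lies in
the Gershgorin region of the second type of `Bᵀ`. -/
theorem stmt2 {n : ℕ} (hn : 2 ≤ n) (A : Matrix (Fin n) (Fin n) ℝ)
    (lam : ℝ) (v : Fin n → ℝ) (hv : ∀ i, v i ≠ 0) (hAv : A *ᵥ v = lam • v)
    (S B : Matrix (Fin n) (Fin n) ℝ) (hS : S = Matrix.diagonal v) (hB : B = S⁻¹ * A * S)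
    (mu : ℂ) (hmu : IsEigenvalueC A mu) (hne : mu ≠ (lam : ℂ)) :
    mu ∈ secondTypeRegion Bᵀ :=
  stmt2_general A lam v hv hAv S B hS hB mu hmu hne
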